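/- Suppose (r, r′) ∈ ℂ² \ (L_even ∪ L_odd). Then the ℂ-vector space of diagonal sequences for (r, r′) is one-dimensional, and every nonzero diagonal sequence s satisfies: (a) if r ∉ −ρ−ℕ and r′ ∉ −ρ′−ℕ, then s(α) ≠ 0 for all α ∈ ℕ; (b) if r = −ρ−i with i ∈ ℕ and r′ ∉ −ρ′−ℕ, then s(α) = 0 for all α ≤ i and s(α) ≠ 0 for all α > i; (c) if r ∉ −ρ−ℕ and r′ = −ρ′−j with j ∈ ℕ, then s(α) ≠ 0 for all α ≤ j and s(α) = 0 for all α > j; (d) if r = −ρ−i and r′ = −ρ′−j with i, j ∈ ℕ and i < j, then s(α) ≠ 0 for all α with i < α ≤ j and s(α) = 0 for all other α. -/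

import Mathlib

noncomputable section

/-- ρ = (n-1)/2 as a complex number. -/
def rho (n : ℕ) : ℂ := ((n : ℂ) - 1) / 2

/-- ρ' = (n-2)/2 as a complex number. -/
def rho' (n : ℕ) : ℂ := ((n : ℂ) - 2) / 2

/-- A diagonal sequence for `(r, r')`:
`(2r'+2α+n−2)·s(α) = (2r+2α+n−1)·s(α+1)` for all `α ∈ ℕ`. -/
def IsDiagSeq (n : ℕ) (r r' : ℂ) (s : ℕ → ℂ) : Prop :=
  ∀ α : ℕ, (2*r' + 2*(α : ℂ) + (n : ℂ) - 2) * s α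
    = (2*r + 2*(α : ℂ) + (n : ℂ) - 1) * s (α + 1)

/-- The ℂ-vector space of diagonal sequences for `(r, r')`. -/
def diagSub (n : ℕ) (r r' : ℂ) : Submodule ℂ (ℕ → ℂ) where
  carrier := {s | IsDiagSeq n r r' s}
  add_mem' := by
    intro a b ha hb α
    simp only [Pi.add_apply]
    linear_combination ha α + hb α
  zero_mem' := by
    intro α
    simp
  smul_mem' := by
    intro c s hs α
    simp only [Pi.smul_apply, smul_eq_mul]
    linear_combination c * hs α

/-- L_even = {(−ρ−i, −ρ′−j) : i, j ∈ ℕ, i − j ∈ 2ℕ}. -/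
def Leven (n : ℕ) : Set (ℂ × ℂ) :=
  {p | ∃ i j : ℕ, p.1 = -rho n - (i : ℂ) ∧ p.2 = -rho' n - (j : ℂ) ∧ ∃ k : ℕ, i = j + 2*k}

/-- L_odd = {(−ρ−i, −ρ′−j) : i, j ∈ ℕ, i − j ∈ 2ℕ+1}. -/
def Lodd (n : ℕ) : Set (ℂ × ℂ) :=
  {p | ∃ i j : ℕ, p.1 = -rho n - (i : ℂ) ∧ p.2 = -rho' n - (j : ℂ) ∧ ∃ k : ℕ, i = j + 2*k + 1}

/-!
Writing the recurrence as `a α · s(α) = b α · s(α+1)`, the coefficient `b` vanishes at most at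
`α = i` (when `r = -ρ-i`) and `a` at most at `α = j` (when `r' = -ρ'-j`), and outside
`L_even ∪ L_odd` every zero of `b` lies strictly below every zero of `a`. Hence there is a pivot
`p` (namely `i + 1`, or `0` if `b` never vanishes) below which `a` is invertible and from which on
`b` is invertible: a solution is then determined by `s(p)`, and the explicit solution
`s(α) = ∏_{p ≤ β < α} a β / b β` (and `0` below `p`) spans. Its support is read off the zeros
of `a` and `b`.
-/

open Finset

section Recurrence

variable {K : Type*} [Field K] {a b : ℕ → K} {p : ℕ} {s : ℕ → K}

variable (a b) in
def recSolutions : Submodule K (ℕ → K) where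
  carrier := {s | ∀ α, a α * s α = b α * s (α + 1)}
  add_mem' {s t} hs ht α := by
    simp only [Pi.add_apply]
    linear_combination hs α + ht α
  zero_mem' α := by simp
  smul_mem' c s hs α := by
    simp only [Pi.smul_apply, smul_eq_mul]
    linear_combination c * hs α

structure IsPivot (a b : ℕ → K) (p : ℕ) : Prop where
  right_eq_zero_of_succ_eq : ∀ α, α + 1 = p → b α = 0
  left_ne_zero_of_lt : ∀ α < p, a α ≠ 0
  right_ne_zero_of_le : ∀ α, p ≤ α → b α ≠ 0

variable (a b p) in
def pivotSol (α : ℕ) : K :=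
  if p ≤ α then ∏ β ∈ Ico p α, a β / b β else 0

@[simp]
theorem pivotSol_self : pivotSol a b p p = 1 := by
  simp [pivotSol]

namespace IsPivot

variable (hp : IsPivot a b p)
include hp

theorem pivotSol_mem : pivotSol a b p ∈ recSolutions a b := by
  intro α
  by_cases hα : p ≤ α
  · have hb := hp.right_ne_zero_of_le α hα
    simp only [pivotSol, if_pos hα, if_pos (hα.trans α.le_succ), prod_Ico_succ_top hα]
    field_simp
  · have hzero : pivotSol a b p α = 0 := if_neg hα
    by_cases heq : α + 1 = p
    · rw [hzero, hp.right_eq_zero_of_succ_eq α heq, mul_zero, zero_mul]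
    · rw [hzero, pivotSol, if_neg (by omega), mul_zero, mul_zero]

theorem eq_zero_of_apply_eq_zero (hs : s ∈ recSolutions a b) (h0 : s p = 0) : s = 0 := by
  suffices ∀ α, s α = 0 from funext this
  intro α
  rcases le_total p α with hα | hα
  · induction α, hα using Nat.le_induction with
    | base => exact h0
    | succ β hβ ih =>
      have h := hs β
      rw [ih, mul_zero] at h
      exact (mul_eq_zero.1 h.symm).resolve_left (hp.right_ne_zero_of_le β hβ)
  · induction hα using Nat.decreasingInduction with
    | self => exact h0
    | of_succ β hβ ih =>
      have h := hs β
      rw [ih, mul_zero] at h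
      exact (mul_eq_zero.1 h).resolve_left (hp.left_ne_zero_of_lt β hβ)

theorem eq_smul_pivotSol (hs : s ∈ recSolutions a b) : s = s p • pivotSol a b p := by
  refine sub_eq_zero.1 (hp.eq_zero_of_apply_eq_zero ?_ (by simp))
  exact sub_mem hs (Submodule.smul_mem _ _ hp.pivotSol_mem)

theorem finrank_eq_one : Module.finrank K (recSolutions a b) = 1 := by
  refine _root_.finrank_eq_one ⟨_, hp.pivotSol_mem⟩ ?_ fun s => ⟨s.1 p, ?_⟩
  · intro h
    simpa using congr_fun (congrArg Subtype.val h) p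
  · exact Subtype.ext (hp.eq_smul_pivotSol s.2).symm

theorem le_iff {α : ℕ} : p ≤ α ↔ ∀ β, b β = 0 → β < α := by
  refine ⟨fun hα β hβ => ?_, fun h => ?_⟩
  · by_contra! hle
    exact hp.right_ne_zero_of_le β (hα.trans hle) hβ
  · rcases p with _ | β
    · exact α.zero_le
    · exact h β (hp.right_eq_zero_of_succ_eq β rfl)

theorem pivotSol_ne_zero_iff {α : ℕ} :
    pivotSol a b p α ≠ 0 ↔ p ≤ α ∧ ∀ β < α, a β ≠ 0 := by
  by_cases hα : p ≤ α
  · rw [pivotSol, if_pos hα, prod_ne_zero_iff]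
    simp only [hα, true_and, mem_Ico, ne_eq, div_eq_zero_iff]
    refine ⟨fun h β hβ => ?_, fun h β hβ => ?_⟩
    · rcases lt_or_ge β p with hβp | hβp
      · exact hp.left_ne_zero_of_lt β hβp
      · exact fun ha => h β ⟨hβp, hβ⟩ (Or.inl ha)
    · rintro (ha | hb)
      · exact h β hβ.2 ha
      · exact hp.right_ne_zero_of_le β hβ.1 hb
  · simp [pivotSol, hα]

theorem apply_ne_zero_iff (hs : s ∈ recSolutions a b) (hne : s ≠ 0) {α : ℕ} :
    s α ≠ 0 ↔ (∀ β, b β = 0 → β < α) ∧ ∀ β, a β = 0 → α ≤ β := by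
  have hsp : s p ≠ 0 := fun h => hne (hp.eq_zero_of_apply_eq_zero hs h)
  rw [hp.eq_smul_pivotSol hs, Pi.smul_apply, smul_eq_mul, mul_ne_zero_iff,
    hp.pivotSol_ne_zero_iff, hp.le_iff]
  simp only [hsp, ne_eq, not_false_eq_true, true_and]
  refine and_congr_right fun _ => forall_congr' fun β => ?_
  rw [← not_lt]
  tauto

end IsPivot

end Recurrence

-- With these coefficients, `IsDiagSeq n r r'` and `diagSub n r r'` unfold to membership in
-- `recSolutions (diagA n r') (diagB n r)`, which the proofs below use definitionally.
def diagA (n : ℕ) (r' : ℂ) (α : ℕ) : ℂ := 2 * r' + 2 * (α : ℂ) + (n : ℂ) - 2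

def diagB (n : ℕ) (r : ℂ) (α : ℕ) : ℂ := 2 * r + 2 * (α : ℂ) + (n : ℂ) - 1

section Diagonal

variable {n : ℕ} {r r' : ℂ}

theorem diagA_eq_zero_iff {α : ℕ} : diagA n r' α = 0 ↔ r' = -rho' n - α := by
  rw [diagA, rho']
  constructor <;> intro h
  · linear_combination h / 2
  · linear_combination 2 * h

theorem diagB_eq_zero_iff {α : ℕ} : diagB n r α = 0 ↔ r = -rho n - α := by
  rw [diagB, rho]
  constructor <;> intro h
  · linear_combination h / 2
  · linear_combination 2 * h

theorem lt_of_not_mem_Leven_union_Lodd (hL : (r, r') ∉ Leven n ∪ Lodd n) {i j : ℕ}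
    (hi : r = -rho n - i) (hj : r' = -rho' n - j) : i < j := by
  by_contra! hji
  obtain ⟨k, hk⟩ := Nat.even_or_odd' (i - j)
  exact hL <| hk.imp (fun hk => ⟨i, j, hi, hj, k, by omega⟩) (fun hk => ⟨i, j, hi, hj, k, by omega⟩)

theorem exists_isPivot_diag (hL : (r, r') ∉ Leven n ∪ Lodd n) :
    ∃ p, IsPivot (diagA n r') (diagB n r) p := by
  by_cases hr : ∃ i : ℕ, r = -rho n - i
  · obtain ⟨i, hi⟩ := hr
    refine ⟨i + 1, ⟨?_, ?_, ?_⟩⟩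
    · intro α hα
      rw [diagB_eq_zero_iff, hi, Nat.succ_injective hα]
    · intro α hα h
      exact absurd (lt_of_not_mem_Leven_union_Lodd hL hi (diagA_eq_zero_iff.1 h)) (by omega)
    · intro α hα h
      rw [diagB_eq_zero_iff, hi, sub_right_inj, Nat.cast_inj] at h
      omega
  · simp only [not_exists] at hr
    exact ⟨0, ⟨by simp, by simp, fun α _ h => hr α (diagB_eq_zero_iff.1 h)⟩⟩

theorem diagSeq_apply_eq_zero_iff (hL : (r, r') ∉ Leven n ∪ Lodd n) {s : ℕ → ℂ}
    (hs : IsDiagSeq n r r' s) (hne : s ≠ 0) (α : ℕ) :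
    s α = 0 ↔ (∃ i : ℕ, -rho n - i = r ∧ α ≤ i) ∨ ∃ j : ℕ, -rho' n - j = r' ∧ j < α := by
  obtain ⟨p, hp⟩ := exists_isPivot_diag hL
  rw [← not_iff_not, ← ne_eq, hp.apply_ne_zero_iff hs hne]
  simp only [diagA_eq_zero_iff, diagB_eq_zero_iff, not_or, not_exists, not_and, not_le, not_lt,
    eq_comm]

end Diagonal

theorem statement0 (n : ℕ) (r r' : ℂ)
    (hL : (r, r') ∉ Leven n ∪ Lodd n) :
    Module.finrank ℂ (diagSub n r r') = 1 ∧
    ∀ s : ℕ → ℂ, IsDiagSeq n r r' s → s ≠ 0 →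
      ((r ∉ Set.range (fun i : ℕ => -rho n - (i : ℂ)) →
        r' ∉ Set.range (fun j : ℕ => -rho' n - (j : ℂ)) →
        ∀ α : ℕ, s α ≠ 0) ∧
       (∀ i : ℕ, r = -rho n - (i : ℂ) →
        r' ∉ Set.range (fun j : ℕ => -rho' n - (j : ℂ)) →
        (∀ α ≤ i, s α = 0) ∧ (∀ α, i < α → s α ≠ 0)) ∧
       (r ∉ Set.range (fun i : ℕ => -rho n - (i : ℂ)) →
        ∀ j : ℕ, r' = -rho' n - (j : ℂ) →
        (∀ α ≤ j, s α ≠ 0) ∧ (∀ α, j < α → s α = 0)) ∧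
       (∀ i j : ℕ, r = -rho n - (i : ℂ) → r' = -rho' n - (j : ℂ) → i < j →
        (∀ α, i < α → α ≤ j → s α ≠ 0) ∧ (∀ α, α ≤ i ∨ j < α → s α = 0))) := by
  obtain ⟨p, hp⟩ := exists_isPivot_diag hL
  refine ⟨hp.finrank_eq_one, fun s hs hne => ?_⟩
  have key := diagSeq_apply_eq_zero_iff hL hs hne
  simp only [Set.mem_range, not_exists]
  refine ⟨fun hr hr' α => ?_, fun i hi hr' => ?_, fun hr j hj => ?_, fun i j hi hj _ => ?_⟩
  · simp [key, hr, hr']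
  · subst hi
    simp [key, hr']
  · subst hj
    simp [key, hr]
  · subst hi hj
    simp +contextual [key]

end
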